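/- arXiv:1612.03553 — 2 statements merged into one kernel-verified Lean document; each statement's English description precedes it below -/
import Mathlib

section
/- Let Λ_0, Λ_1, Λ_2, … be a sequence of complex numbers, and let A, σ and V be as defined in the context. Then for all integers k ≥ 1 and j ≥ 0 one has V(k,j) = (Λ_{k−1} + j)·V(k−1,j) + V(k−1,j−1). -/
/-- The shifted double sequence `besselA' (j+1) (m+1) = A(j, m)`, where
`A(-1,0) = 1`, `A(-1,m) = 0` for `m ≥ 1`, `A(j,-1) = 0` for `j ≥ 0`, and
`A(j,m) = j·A(j,m-1) + A(j-1,m)` for `j, m ≥ 0`. -/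
def besselA' : ℕ → ℕ → ℤ
  | 0, 0 => 0
  | 0, 1 => 1
  | 0, _ + 2 => 0
  | _ + 1, 0 => 0
  | j + 1, m + 1 => (j : ℤ) * besselA' (j + 1) m + besselA' j (m + 1)
termination_by j m => (j, m)

/-- `besselA j m = A(j, m)` for `j, m ≥ 0`. -/
def besselA (j m : ℕ) : ℤ := besselA' (j + 1) (m + 1)

/-- `sigmaE Λ k m = σ_{k-1,m}`, the elementary symmetric polynomial of degree `m`
in `Λ_0, …, Λ_{k-1}` (so `sigmaE Λ 0 m = σ_{-1,m}`, which is `1` for `m = 0` and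
`0` otherwise; and `sigmaE Λ k m = 0` for `m > k`). -/
noncomputable def sigmaE (Λ : ℕ → ℂ) (k m : ℕ) : ℂ :=
  ∑ t ∈ Finset.powersetCard m (Finset.range k), ∏ i ∈ t, Λ i

/-- `Vcoef Λ k j = V(k,j) = ∑_{m=0}^{k-j} A(j, k-j-m)·σ_{k-1,m}` for `0 ≤ j ≤ k`,
and `V(k,j) = 0` for `j > k` or `j < 0`. -/
noncomputable def Vcoef (Λ : ℕ → ℂ) (k : ℕ) (j : ℤ) : ℂ :=
  if j < 0 ∨ (k : ℤ) < j then 0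
  else ∑ m ∈ Finset.range (k - j.toNat + 1),
    (besselA j.toNat (k - j.toNat - m) : ℂ) * sigmaE Λ k m

/-! ### Auxiliary lemmas -/

lemma besselA'_zero_one : besselA' 0 1 = 1 := by rw [besselA']

lemma besselA'_zero_two (r : ℕ) : besselA' 0 (r + 2) = 0 := by rw [besselA']

lemma besselA'_succ_zero (n : ℕ) : besselA' (n + 1) 0 = 0 := by rw [besselA']

lemma besselA'_rec (n m : ℕ) :
    besselA' (n + 1) (m + 1) = (n : ℤ) * besselA' (n + 1) m + besselA' n (m + 1) := by
  rw [besselA']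

lemma besselA_rec (n r : ℕ) :
    besselA n r = (n : ℤ) * besselA' (n + 1) r + besselA' n (r + 1) :=
  besselA'_rec n r

lemma besselA_zero (j : ℕ) : besselA j 0 = 1 := by
  induction j with
  | zero => rw [besselA, besselA'_rec]; simp [besselA'_zero_one]
  | succ n ih =>
    rw [besselA, besselA'_rec, besselA'_succ_zero]
    simpa [besselA] using ih

lemma sigmaE_zero (Λ : ℕ → ℂ) (k : ℕ) : sigmaE Λ k 0 = 1 := by
  simp [sigmaE]

lemma sigmaE_of_lt (Λ : ℕ → ℂ) (k m : ℕ) (h : k < m) : sigmaE Λ k m = 0 := by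
  rw [sigmaE, Finset.powersetCard_eq_empty.2 (by simpa using h), Finset.sum_empty]

lemma sigmaE_succ (Λ : ℕ → ℂ) (K m : ℕ) :
    sigmaE Λ (K + 1) (m + 1) = sigmaE Λ K (m + 1) + Λ K * sigmaE Λ K m := by
  have hK : K ∉ Finset.range K := by simp
  have hnot : ∀ t ∈ Finset.powersetCard m (Finset.range K), K ∉ t :=
    fun t ht h => hK (Finset.mem_powersetCard.1 ht |>.1 h)
  rw [sigmaE, Finset.range_add_one, Finset.powersetCard_succ_insert hK,
    Finset.sum_union, Finset.sum_image]
  · congr 1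
    rw [sigmaE, Finset.mul_sum]
    exact Finset.sum_congr rfl fun t ht => Finset.prod_insert (hnot t ht)
  · intro a ha b hb hab
    rw [← Finset.erase_insert (hnot a ha), ← Finset.erase_insert (hnot b hb), hab]
  · rw [Finset.disjoint_right]
    intro t ht ht'
    obtain ⟨s, hs, rfl⟩ := Finset.mem_image.1 ht
    exact hK ((Finset.mem_powersetCard.1 ht').1 (Finset.mem_insert_self K s))

/-- Natural-number version of `Vcoef` (valid when `n ≤ k`). -/
noncomputable def Vnat (Λ : ℕ → ℂ) (k n : ℕ) : ℂ :=
  ∑ m ∈ Finset.range (k - n + 1), (besselA n (k - n - m) : ℂ) * sigmaE Λ k m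

lemma Vcoef_eq_Vnat (Λ : ℕ → ℂ) (k n : ℕ) (h : n ≤ k) :
    Vcoef Λ k (n : ℤ) = Vnat Λ k n := by
  rw [Vcoef, if_neg (by push_cast; omega)]
  simp [Vnat]

lemma Vnat_self (Λ : ℕ → ℂ) (k : ℕ) : Vnat Λ k k = 1 := by
  simp [Vnat, besselA_zero, sigmaE_zero]

/-- The main computation step. -/
lemma stepA (Λ : ℕ → ℂ) (n e : ℕ) :
    Vnat Λ (n + e + 1) n = (Λ (n + e) + (n : ℂ)) * Vnat Λ (n + e) n +
      ∑ m ∈ Finset.range (e + 2), (besselA' n (e + 1 - m + 1) : ℂ) * sigmaE Λ (n + e) m := by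
  have h1 : n + e + 1 - n = e + 1 := by omega
  have h2 : n + e - n = e := by omega
  set σ : ℕ → ℂ := sigmaE Λ (n + e) with hσ
  set Λ' : ℂ := Λ (n + e) with hΛ'
  -- key1 : expand sigmaE at level n+e+1 into level n+e
  have key1 : ∑ m ∈ Finset.range (e + 2),
        (besselA n (e + 1 - m) : ℂ) * sigmaE Λ (n + e + 1) m
      = (∑ m ∈ Finset.range (e + 2), (besselA n (e + 1 - m) : ℂ) * σ m)
        + Λ' * ∑ i ∈ Finset.range (e + 1), (besselA n (e - i) : ℂ) * σ i := by
    rw [Finset.sum_range_succ' _ (e + 1), Finset.sum_range_succ' (fun m => (besselA n (e+1-m):ℂ) * σ m) (e + 1)]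
    simp only [Nat.succ_sub_succ, Nat.sub_zero]
    rw [show sigmaE Λ (n + e + 1) 0 = 1 from sigmaE_zero Λ _,
      show σ 0 = 1 from sigmaE_zero Λ _]
    have hterm : ∀ i ∈ Finset.range (e + 1),
        (besselA n (e - i) : ℂ) * sigmaE Λ (n + e + 1) (i + 1)
          = ((besselA n (e - i) : ℂ) * σ (i + 1) + Λ' * ((besselA n (e - i) : ℂ) * σ i)) := by
      intro i _
      rw [sigmaE_succ Λ (n + e) i, hσ, hΛ']
      ring
    rw [Finset.sum_congr rfl hterm, Finset.sum_add_distrib, Finset.mul_sum]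
    ring
  -- key2a : apply the besselA recurrence termwise
  have key2a : ∑ m ∈ Finset.range (e + 2), (besselA n (e + 1 - m) : ℂ) * σ m
      = (n : ℂ) * ∑ m ∈ Finset.range (e + 2), (besselA' (n + 1) (e + 1 - m) : ℂ) * σ m
        + ∑ m ∈ Finset.range (e + 2), (besselA' n (e + 1 - m + 1) : ℂ) * σ m := by
    rw [Finset.mul_sum, ← Finset.sum_add_distrib]
    refine Finset.sum_congr rfl fun m _ => ?_
    rw [besselA_rec n (e + 1 - m)]
    push_cast
    ring
  -- key2b : drop the vanishing last term
  have key2b : ∑ m ∈ Finset.range (e + 2), (besselA' (n + 1) (e + 1 - m) : ℂ) * σ m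
      = ∑ i ∈ Finset.range (e + 1), (besselA n (e - i) : ℂ) * σ i := by
    rw [Finset.sum_range_succ]
    rw [show e + 1 - (e + 1) = 0 by omega, besselA'_succ_zero]
    simp only [Int.cast_zero, zero_mul, add_zero]
    refine Finset.sum_congr rfl fun m hm => ?_
    have hm' : m ≤ e := by simpa [Nat.lt_succ_iff] using hm
    rw [show e + 1 - m = (e - m) + 1 by omega]
    rfl
  rw [Vnat, Vnat, h1, h2, key1, key2a, key2b]
  ring

lemma main_zero (Λ : ℕ → ℂ) (e : ℕ) :
    Vnat Λ (e + 1) 0 = (Λ e + (0 : ℂ)) * Vnat Λ e 0 := by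
  have h := stepA Λ 0 e
  simp only [Nat.zero_add, zero_add] at h
  rw [h]
  have hT : ∑ m ∈ Finset.range (e + 2), (besselA' 0 (e + 1 - m + 1) : ℂ) * sigmaE Λ e m = 0 := by
    refine Finset.sum_eq_zero fun m hm => ?_
    have hm' : m < e + 2 := Finset.mem_range.1 hm
    rcases Nat.lt_or_ge m (e + 1) with h | h
    · rw [show e + 1 - m + 1 = (e - m) + 2 by omega, besselA'_zero_two]
      simp
    · have : m = e + 1 := by omega
      subst this
      rw [sigmaE_of_lt Λ e (e + 1) (by omega), mul_zero]
  rw [hT, add_zero]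
  norm_num

lemma main_succ (Λ : ℕ → ℂ) (n' e : ℕ) :
    Vnat Λ (n' + 1 + e + 1) (n' + 1)
      = (Λ (n' + 1 + e) + ((n' : ℂ) + 1)) * Vnat Λ (n' + 1 + e) (n' + 1)
        + Vnat Λ (n' + 1 + e) n' := by
  have h := stepA Λ (n' + 1) e
  push_cast at h
  rw [h]
  congr 1
  rw [Vnat, show n' + 1 + e - n' = e + 1 by omega]
  refine Finset.sum_congr rfl fun m hm => ?_
  rfl

/-- The recurrence `V(k,j) = (Λ_{k-1} + j)·V(k-1,j) + V(k-1,j-1)` for `k ≥ 1`, `j ≥ 0`. -/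
theorem stmt_9 (Λ : ℕ → ℂ) (k : ℕ) (hk : 1 ≤ k) (j : ℤ) (hj : 0 ≤ j) :
    Vcoef Λ k j = (Λ (k - 1) + (j : ℂ)) * Vcoef Λ (k - 1) j + Vcoef Λ (k - 1) (j - 1) := by
  obtain ⟨K, rfl⟩ : ∃ K, k = K + 1 := ⟨k - 1, by omega⟩
  lift j to ℕ using hj
  simp only [Nat.add_sub_cancel]
  rcases Nat.lt_or_ge (K + 1) j with hgt | hle
  · -- j > K + 1 : everything vanishes
    rw [Vcoef, if_pos (by right; push_cast; omega),
      Vcoef, if_pos (by right; push_cast; omega),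
      Vcoef, if_pos (by right; push_cast; omega)]
    ring
  · rcases Nat.lt_or_ge K j with hKj | hjK
    · -- j = K + 1
      have hj1 : j = K + 1 := by omega
      subst hj1
      rw [Vcoef_eq_Vnat Λ (K + 1) (K + 1) le_rfl, Vnat_self,
        Vcoef, if_pos (by right; push_cast; omega),
        show ((K + 1 : ℕ) : ℤ) - 1 = ((K : ℕ) : ℤ) by push_cast; ring,
        Vcoef_eq_Vnat Λ K K le_rfl, Vnat_self]
      ring
    · -- j ≤ K
      obtain ⟨e, rfl⟩ : ∃ e, K = j + e := ⟨K - j, by omega⟩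
      rw [Vcoef_eq_Vnat Λ (j + e + 1) j (by omega), Vcoef_eq_Vnat Λ (j + e) j (by omega)]
      rcases j with _ | n'
      · -- j = 0
        rw [show ((0 : ℕ) : ℤ) - 1 = (-1 : ℤ) by ring, Vcoef, if_pos (by left; omega)]
        simp only [Nat.zero_add] at *
        rw [main_zero Λ e]
        push_cast
        ring
      · -- j = n' + 1
        rw [show ((n' + 1 : ℕ) : ℤ) - 1 = ((n' : ℕ) : ℤ) by push_cast; ring,
          Vcoef_eq_Vnat Λ (n' + 1 + e) n' (by omega), main_succ Λ n' e]
        push_cast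
        ring
end

section
/- Let d ≥ 1, let m = (m_1,…,m_{d+1}) ∈ ℤ^{d+1}, let x > 0, and let ν = (ν_1,…,ν_d) ∈ ℂᵈ. Suppose there exists a real number a with −1/2 ≤ a ≤ |m_{d+1}| such that −(1/2 + a)/2 < Re ν_l < (|m_l| − a)/2 for all 1 ≤ l ≤ d. Then the function (y_1,…,y_d) ↦ j_{m_{d+1}}(x·y_1⋯y_d) · ∏_{l=1}^d y_l^{2ν_l−1} · j_{m_l}(x/y_l) is Lebesgue integrable on (0,∞)^d, where y^{2ν−1} = exp((2ν−1)·log y) for y > 0. -/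
/-!
As `t → 0`, `‖j_m(t)‖ ≪ t^|m|`, because the Taylor polynomial of degree `< |m|` of
`exp (4πit cos θ)` is orthogonal to `exp (imθ)`. As `t → ∞`, `‖j_m(t)‖ ≪ t^(-1/2)` by van der
Corput's first and second derivative estimates for the phase `mθ + 4πt cos θ`. Interpolating,
`‖j_m(t)‖ ≤ C t^a` for `-1/2 ≤ a ≤ |m|`.

Applied to `j_{m_{d+1}}(x y_1 ⋯ y_d)`, this dominates the integrand by `C x^a` times the product
over `l` of `y_l^(a + 2 Re ν_l - 1) ‖j_{m_l}(x / y_l)‖`. By the two bounds at `0` and `∞`, each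
factor is integrable on `(0, ∞)` as soon as `-(1/2 + a)/2 < Re ν_l < (|m_l| - a)/2`, and a
product of integrable functions of separate variables is integrable.
-/

open MeasureTheory

/-- `jint m t = ∫_0^{2π} exp(i(mθ + 4πt·cos θ)) dθ = 2π·iᵐ·J_m(4πt)`. -/
noncomputable def jint (m : ℤ) (t : ℝ) : ℂ :=
  ∫ θ in (0 : ℝ)..(2 * Real.pi),
    Complex.exp (Complex.I * (((m : ℝ) * θ + 4 * Real.pi * t * Real.cos θ : ℝ) : ℂ))

open Complex Set intervalIntegral
open scoped Real ComplexConjugate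

section VanDerCorput

theorem norm_integral_exp_I_mul_le (f : ℝ → ℝ) (a b : ℝ) :
    ‖∫ θ in a..b, exp (I * f θ)‖ ≤ |b - a| := by
  simpa using norm_integral_le_of_norm_le_const (C := 1) (f := fun θ => exp (I * f θ))
    fun θ _ => (norm_exp_I_mul_ofReal (f θ)).le

theorem integral_exp_I_mul_neg (f : ℝ → ℝ) (a b : ℝ) :
    ∫ θ in a..b, exp (I * ↑(-f θ)) = conj (∫ θ in a..b, exp (I * f θ)) := by
  rw [← intervalIntegral_conj]
  congr 1 with θ
  rw [← exp_conj, map_mul, conj_I, conj_ofReal, ofReal_neg, neg_mul, mul_neg]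

theorem integral_exp_I_mul_comp_sub_left (f : ℝ → ℝ) (a b : ℝ) :
    ∫ θ in a..b, exp (I * f (a + b - θ)) = ∫ θ in a..b, exp (I * f θ) := by
  simpa using integral_comp_sub_left (fun θ => exp (I * f θ)) (a + b) (a := a) (b := b)

variable {f f' f'' : ℝ → ℝ} {a b lam : ℝ}

/-- Integration by parts against `d/dθ (exp (i f) / (i f'))`. -/
theorem norm_integral_exp_I_mul_le_of_deriv_ne_zero (hab : a ≤ b)
    (hf : ∀ θ, HasDerivAt f (f' θ) θ) (hf' : ∀ θ, HasDerivAt f' (f'' θ) θ)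
    (hf'' : Continuous f'') (hne : ∀ θ ∈ Icc a b, f' θ ≠ 0) :
    ‖∫ θ in a..b, exp (I * f θ)‖ ≤ |f' a|⁻¹ + |f' b|⁻¹ + ∫ θ in a..b, |f'' θ| / f' θ ^ 2 := by
  have hcf : Continuous f := Differentiable.continuous fun θ => (hf θ).differentiableAt
  have hcf' : Continuous f' := Differentiable.continuous fun θ => (hf' θ).differentiableAt
  set F : ℝ → ℂ := fun θ => exp (I * f θ) / (I * f' θ)
  set G : ℝ → ℂ := fun θ => exp (I * f θ) * (I * f'' θ) / (f' θ : ℂ) ^ 2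
  have hF : ∀ θ ∈ uIcc a b, HasDerivAt F (exp (I * f θ) + G θ) θ := by
    intro θ hθ
    rw [uIcc_of_le hab] at hθ
    have h0 : (f' θ : ℂ) ≠ 0 := ofReal_ne_zero.2 (hne θ hθ)
    have := (((hf θ).ofReal_comp.const_mul I).cexp).div ((hf' θ).ofReal_comp.const_mul I)
      (mul_ne_zero I_ne_zero h0)
    refine this.congr_deriv ?_
    simp only [G]
    rw [show (I * (f' θ : ℂ)) ^ 2 = -(f' θ : ℂ) ^ 2 by rw [mul_pow, I_sq]; ring]
    field_simp
    linear_combination -(f' θ : ℂ) ^ 2 * I_sq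
  have hGint : IntervalIntegrable G volume a b := by
    refine ContinuousOn.intervalIntegrable fun θ hθ => ?_
    rw [uIcc_of_le hab] at hθ
    exact ((by fun_prop : Continuous fun θ => exp (I * f θ) * (I * f'' θ)).continuousAt.div
      (hcf'.continuousAt.ofReal.pow 2)
      (pow_ne_zero 2 (ofReal_ne_zero.2 (hne θ hθ)))).continuousWithinAt
  have hexp : IntervalIntegrable (fun θ => exp (I * f θ)) volume a b :=
    (by fun_prop : Continuous fun θ => exp (I * f θ)).intervalIntegrable a b
  have hFTC : ∫ θ in a..b, exp (I * f θ) = F b - F a - ∫ θ in a..b, G θ := by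
    rw [eq_sub_iff_add_eq, ← integral_add hexp hGint,
      integral_eq_sub_of_hasDerivAt hF (hexp.add hGint)]
  have hnormF : ∀ θ, ‖F θ‖ = |f' θ|⁻¹ := fun θ => by
    simp [F, norm_exp_I_mul_ofReal]
  have hnormG : ∀ θ, ‖G θ‖ = |f'' θ| / f' θ ^ 2 := fun θ => by
    simp [G, norm_exp_I_mul_ofReal]
  calc ‖∫ θ in a..b, exp (I * f θ)‖
      ≤ ‖F b‖ + ‖F a‖ + ‖∫ θ in a..b, G θ‖ := by
        rw [hFTC]; exact (norm_sub_le _ _).trans (by gcongr; exact norm_sub_le _ _)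
    _ ≤ |f' a|⁻¹ + |f' b|⁻¹ + ∫ θ in a..b, |f'' θ| / f' θ ^ 2 := by
        rw [hnormF, hnormF, add_comm |f' b|⁻¹]
        gcongr
        simpa only [hnormG] using norm_integral_le_integral_norm (f := G) hab

theorem norm_integral_exp_I_mul_le_of_le_deriv_of_deriv2_nonneg (hab : a ≤ b) (hlam : 0 < lam)
    (hf : ∀ θ, HasDerivAt f (f' θ) θ) (hf' : ∀ θ, HasDerivAt f' (f'' θ) θ)
    (hf'' : Continuous f'') (hlam_le : ∀ θ ∈ Icc a b, lam ≤ f' θ)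
    (hconvex : ∀ θ ∈ Icc a b, 0 ≤ f'' θ) :
    ‖∫ θ in a..b, exp (I * f θ)‖ ≤ 2 / lam := by
  have hpos : ∀ θ ∈ Icc a b, 0 < f' θ := fun θ hθ => hlam.trans_le (hlam_le θ hθ)
  have ha : a ∈ Icc a b := left_mem_Icc.2 hab
  have hb : b ∈ Icc a b := right_mem_Icc.2 hab
  have hcf' : Continuous f' := Differentiable.continuous fun θ => (hf' θ).differentiableAt
  have hvar : ∫ θ in a..b, |f'' θ| / f' θ ^ 2 = (f' a)⁻¹ - (f' b)⁻¹ := by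
    have hderiv : ∀ θ ∈ uIcc a b, HasDerivAt (fun θ => -(f' θ)⁻¹) (|f'' θ| / f' θ ^ 2) θ := by
      intro θ hθ
      rw [uIcc_of_le hab] at hθ
      refine ((hf' θ).inv (hpos θ hθ).ne').neg.congr_deriv ?_
      rw [abs_of_nonneg (hconvex θ hθ)]
      ring
    rw [integral_eq_sub_of_hasDerivAt hderiv, neg_sub_neg]
    refine ContinuousOn.intervalIntegrable fun θ hθ => ?_
    rw [uIcc_of_le hab] at hθ
    exact ((hf''.abs.continuousAt).div (hcf'.continuousAt.pow 2)
      (pow_ne_zero 2 (hpos θ hθ).ne')).continuousWithinAt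
  calc ‖∫ θ in a..b, exp (I * f θ)‖
      ≤ |f' a|⁻¹ + |f' b|⁻¹ + ∫ θ in a..b, |f'' θ| / f' θ ^ 2 :=
        norm_integral_exp_I_mul_le_of_deriv_ne_zero hab hf hf' hf'' fun θ hθ => (hpos θ hθ).ne'
    _ = 2 / f' a := by
        rw [hvar, abs_of_pos (hpos a ha), abs_of_pos (hpos b hb)]
        ring
    _ ≤ 2 / lam := by gcongr; exact hlam_le a ha

/-- On `[a, a + 1/√λ]` use the trivial bound, beyond it `f' ≥ √λ`. -/
theorem norm_integral_exp_I_mul_le_of_le_deriv2_of_deriv_nonneg (hab : a ≤ b) (hlam : 0 < lam)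
    (hf : ∀ θ, HasDerivAt f (f' θ) θ) (hf' : ∀ θ, HasDerivAt f' (f'' θ) θ)
    (hf'' : Continuous f'') (hlam_le : ∀ θ ∈ Icc a b, lam ≤ f'' θ) (ha : 0 ≤ f' a) :
    ‖∫ θ in a..b, exp (I * f θ)‖ ≤ 3 / √lam := by
  have hsqrt : 0 < √lam := Real.sqrt_pos.2 hlam
  set δ := (√lam)⁻¹
  have hδ : 0 < δ := inv_pos.2 hsqrt
  rcases le_or_gt b (a + δ) with hb | hb
  · calc ‖∫ θ in a..b, exp (I * f θ)‖ ≤ |b - a| := norm_integral_exp_I_mul_le f a b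
      _ ≤ δ := by rw [abs_of_nonneg (sub_nonneg.2 hab)]; linarith
      _ ≤ 3 / √lam := by rw [div_eq_mul_inv]; linarith
  have hcf' : Continuous f' := Differentiable.continuous fun θ => (hf' θ).differentiableAt
  have hgrowth : ∀ θ ∈ Icc a b, lam * (θ - a) ≤ f' θ - f' a := fun θ hθ =>
    (convex_Icc a b).mul_sub_le_image_sub_of_le_deriv hcf'.continuousOn
      (fun x _ => (hf' x).differentiableAt.differentiableWithinAt)
      (fun x hx => (hf' x).deriv ▸ hlam_le x (interior_subset hx)) a (left_mem_Icc.2 hab) θ hθ hθ.1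
  have hcf : Continuous f := Differentiable.continuous fun θ => (hf θ).differentiableAt
  have hII : ∀ u v, IntervalIntegrable (fun θ => exp (I * f θ)) volume u v := fun u v =>
    (by fun_prop : Continuous fun θ => exp (I * (f θ : ℂ))).intervalIntegrable u v
  rw [← integral_add_adjacent_intervals (hII a (a + δ)) (hII (a + δ) b)]
  have hnear : ‖∫ θ in a..a + δ, exp (I * f θ)‖ ≤ δ := by
    simpa [abs_of_pos hδ] using norm_integral_exp_I_mul_le f a (a + δ)
  have hfar : ‖∫ θ in a + δ..b, exp (I * f θ)‖ ≤ 2 / √lam := by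
    refine norm_integral_exp_I_mul_le_of_le_deriv_of_deriv2_nonneg hb.le hsqrt hf hf' hf''
      (fun θ hθ => ?_) fun θ hθ => hlam.le.trans (hlam_le θ ⟨by linarith [hθ.1], hθ.2⟩)
    have h := hgrowth θ ⟨by linarith [hθ.1], hθ.2⟩
    have : lam * δ = √lam := by rw [← div_eq_mul_inv, Real.div_sqrt]
    nlinarith [hθ.1]
  calc _ ≤ ‖∫ θ in a..a + δ, exp (I * f θ)‖ + ‖∫ θ in a + δ..b, exp (I * f θ)‖ := norm_add_le _ _
    _ ≤ δ + 2 / √lam := add_le_add hnear hfar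
    _ = 3 / √lam := by simp only [δ]; ring

theorem norm_integral_exp_I_mul_le_of_le_deriv2 (hab : a ≤ b) (hlam : 0 < lam)
    (hf : ∀ θ, HasDerivAt f (f' θ) θ) (hf' : ∀ θ, HasDerivAt f' (f'' θ) θ)
    (hf'' : Continuous f'') (hlam_le : ∀ θ ∈ Icc a b, lam ≤ f'' θ) :
    ‖∫ θ in a..b, exp (I * f θ)‖ ≤ 6 / √lam := by
  have hcf' : Continuous f' := Differentiable.continuous fun θ => (hf' θ).differentiableAt
  have hright : ∀ c ∈ Icc a b, 0 ≤ f' c → ‖∫ θ in c..b, exp (I * f θ)‖ ≤ 3 / √lam :=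
    fun c hc hfc => norm_integral_exp_I_mul_le_of_le_deriv2_of_deriv_nonneg hc.2 hlam hf hf' hf''
      (fun θ hθ => hlam_le θ ⟨hc.1.trans hθ.1, hθ.2⟩) hfc
  have hleft : ∀ c ∈ Icc a b, f' c ≤ 0 → ‖∫ θ in a..c, exp (I * f θ)‖ ≤ 3 / √lam := by
    intro c hc hfc
    rw [← integral_exp_I_mul_comp_sub_left]
    refine norm_integral_exp_I_mul_le_of_le_deriv2_of_deriv_nonneg hc.1 hlam
      (f' := fun θ => -f' (a + c - θ)) (f'' := fun θ => f'' (a + c - θ))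
      (fun θ => ?_) (fun θ => ?_) (by fun_prop)
      (fun θ hθ => hlam_le _ ⟨by linarith [hθ.2], by linarith [hθ.1, hc.2]⟩) (by simpa using hfc)
    · exact (hf (a + c - θ)).comp_const_sub (a + c) θ
    · exact ((hf' (a + c - θ)).comp_const_sub (a + c) θ).neg.congr_deriv (neg_neg _)
  have h36 : 3 / √lam ≤ 6 / √lam := by gcongr; norm_num
  rcases le_or_gt 0 (f' a) with ha | ha
  · exact (hright a (left_mem_Icc.2 hab) ha).trans h36
  rcases le_or_gt (f' b) 0 with hb | hb
  · exact (hleft b (right_mem_Icc.2 hab) hb).trans h36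
  obtain ⟨c, hc, hfc⟩ := intermediate_value_Icc hab hcf'.continuousOn ⟨ha.le, hb.le⟩
  have hcf : Continuous f := Differentiable.continuous fun θ => (hf θ).differentiableAt
  have hII : ∀ u v, IntervalIntegrable (fun θ => exp (I * f θ)) volume u v := fun u v =>
    (by fun_prop : Continuous fun θ => exp (I * (f θ : ℂ))).intervalIntegrable u v
  rw [← integral_add_adjacent_intervals (hII a c) (hII c b)]
  calc _ ≤ ‖∫ θ in a..c, exp (I * f θ)‖ + ‖∫ θ in c..b, exp (I * f θ)‖ := norm_add_le _ _
    _ ≤ 3 / √lam + 3 / √lam := add_le_add (hleft c hc hfc.le) (hright c hc hfc.ge)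
    _ = 6 / √lam := by ring

theorem norm_integral_exp_I_mul_le_of_le_deriv2_or_deriv2_le_neg (hab : a ≤ b) (hlam : 0 < lam)
    (hf : ∀ θ, HasDerivAt f (f' θ) θ) (hf' : ∀ θ, HasDerivAt f' (f'' θ) θ)
    (hf'' : Continuous f'')
    (hlam_le : (∀ θ ∈ Icc a b, lam ≤ f'' θ) ∨ ∀ θ ∈ Icc a b, f'' θ ≤ -lam) :
    ‖∫ θ in a..b, exp (I * f θ)‖ ≤ 6 / √lam := by
  rcases hlam_le with h | h
  · exact norm_integral_exp_I_mul_le_of_le_deriv2 hab hlam hf hf' hf'' h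
  · have := norm_integral_exp_I_mul_le_of_le_deriv2 (f := fun θ => -f θ) hab hlam
      (fun θ => (hf θ).neg) (fun θ => (hf' θ).neg) hf''.neg fun θ hθ => le_neg.2 (h θ hθ)
    rwa [integral_exp_I_mul_neg, RCLike.norm_conj] at this

end VanDerCorput

section CosinePhase

variable {μ z a b : ℝ}

theorem hasDerivAt_mul_add_mul_cos (μ z θ : ℝ) :
    HasDerivAt (fun θ => μ * θ + z * Real.cos θ) (μ - z * Real.sin θ) θ :=
  (((hasDerivAt_id θ).const_mul μ).add ((Real.hasDerivAt_cos θ).const_mul z)).congr_deriv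
    (by simp [sub_eq_add_neg])

theorem hasDerivAt_sub_mul_sin (μ z θ : ℝ) :
    HasDerivAt (fun θ => μ - z * Real.sin θ) (-(z * Real.cos θ)) θ :=
  ((Real.hasDerivAt_sin θ).const_mul z).const_sub μ

theorem half_le_cos_of_abs_le {θ : ℝ} (h : |θ| ≤ π / 3) : 1 / 2 ≤ Real.cos θ := by
  rw [← Real.cos_pi_div_three, ← Real.cos_abs θ]
  exact Real.cos_le_cos_of_nonneg_of_le_pi (abs_nonneg θ) (by linarith [Real.pi_pos]) h

theorem cos_le_neg_half_of_abs_sub_pi_le {θ : ℝ} (h : |θ - π| ≤ π / 3) :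
    Real.cos θ ≤ -(1 / 2) := by
  have := half_le_cos_of_abs_le h
  rw [Real.cos_sub_pi] at this
  linarith

theorem half_le_abs_sin_of_abs_sub_pi_div_two_le {θ : ℝ} (h : |θ - π / 2| ≤ π / 3) :
    1 / 2 ≤ |Real.sin θ| := by
  have := half_le_cos_of_abs_le h
  rw [Real.cos_sub_pi_div_two] at this
  exact this.trans (le_abs_self _)

theorem norm_integral_exp_mul_add_mul_cos_le_of_cos (hz : 0 < z) (hab : a ≤ b)
    (hcos : (∀ θ ∈ Icc a b, 1 / 2 ≤ Real.cos θ) ∨ ∀ θ ∈ Icc a b, Real.cos θ ≤ -(1 / 2)) :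
    ‖∫ θ in a..b, exp (I * ↑(μ * θ + z * Real.cos θ))‖ ≤ 9 / √z := by
  have hsqrt2 : 6 / √(z / 2) ≤ 9 / √z := by
    rw [Real.sqrt_div' z zero_le_two, div_div_eq_mul_div,
      div_le_div_iff_of_pos_right (Real.sqrt_pos.2 hz)]
    nlinarith [Real.sq_sqrt (zero_le_two : (0 : ℝ) ≤ 2), Real.sqrt_nonneg 2]
  refine (norm_integral_exp_I_mul_le_of_le_deriv2_or_deriv2_le_neg hab (half_pos hz)
    (hasDerivAt_mul_add_mul_cos μ z) (hasDerivAt_sub_mul_sin μ z) (by fun_prop) ?_).trans hsqrt2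
  rcases hcos with h | h
  · exact .inr fun θ hθ => by nlinarith [h θ hθ]
  · exact .inl fun θ hθ => by nlinarith [h θ hθ]

theorem norm_integral_exp_mul_add_mul_cos_le_of_sin (hz : 0 < z) (hμ : 4 * |μ| ≤ z) (hab : a ≤ b)
    (hsin : ∀ θ ∈ Icc a b, 1 / 2 ≤ |Real.sin θ|) :
    ‖∫ θ in a..b, exp (I * ↑(μ * θ + z * Real.cos θ))‖ ≤ 8 / z + 16 * (b - a) / z := by
  have hderiv : ∀ θ ∈ Icc a b, z / 4 ≤ |μ - z * Real.sin θ| := fun θ hθ => by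
    have h := abs_sub_abs_le_abs_sub (z * Real.sin θ) μ
    rw [abs_mul, abs_of_pos hz, abs_sub_comm] at h
    nlinarith [hsin θ hθ]
  have hinv : ∀ θ ∈ Icc a b, |μ - z * Real.sin θ|⁻¹ ≤ 4 / z := fun θ hθ => by
    rw [← inv_div]; exact inv_anti₀ (by positivity) (hderiv θ hθ)
  have hvar : ∫ θ in a..b, |-(z * Real.cos θ)| / (μ - z * Real.sin θ) ^ 2 ≤ 16 * (b - a) / z := by
    refine (le_abs_self _).trans ?_
    have := norm_integral_le_of_norm_le_const (a := a) (b := b) (C := 16 / z)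
      (f := fun θ => |-(z * Real.cos θ)| / (μ - z * Real.sin θ) ^ 2) fun θ hθ => by
        have hθ' : θ ∈ Icc a b := Ioc_subset_Icc_self (by rwa [uIoc_of_le hab] at hθ)
        have h := hderiv θ hθ'
        rw [Real.norm_eq_abs, abs_div, abs_abs, abs_neg, abs_mul, abs_of_pos hz, abs_pow,
          div_le_div_iff₀ (pow_pos ((by positivity : 0 < z / 4).trans_le h) 2) hz]
        have hcos : z * |Real.cos θ| * z ≤ z * 1 * z := by gcongr; exact Real.abs_cos_le_one θ
        nlinarith [pow_le_pow_left₀ (by positivity) h 2]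
    rw [abs_of_nonneg (sub_nonneg.2 hab), Real.norm_eq_abs] at this
    exact this.trans_eq (by ring)
  calc _ ≤ _ := norm_integral_exp_I_mul_le_of_deriv_ne_zero hab (hasDerivAt_mul_add_mul_cos μ z)
        (hasDerivAt_sub_mul_sin μ z) (by fun_prop)
        fun θ hθ => abs_pos.1 ((by positivity : 0 < z / 4).trans_le (hderiv θ hθ))
    _ ≤ 4 / z + 4 / z + 16 * (b - a) / z := by
        gcongr
        exacts [hinv a (left_mem_Icc.2 hab), hinv b (right_mem_Icc.2 hab)]
    _ = 8 / z + 16 * (b - a) / z := by ring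

/-- On `[0, 2π]` cut at `π/3, 2π/3, 4π/3, 5π/3`, each piece has `|cos θ| ≥ 1/2` or
`|sin θ| ≥ 1/2`. -/
theorem norm_integral_exp_mul_add_mul_cos_le (hz : 1 ≤ z) (hμ : 4 * |μ| ≤ z) :
    ‖∫ θ in (0 : ℝ)..2 * π, exp (I * ↑(μ * θ + z * Real.cos θ))‖ ≤ 77 / √z := by
  have hz0 : 0 < z := by linarith
  have hπ := Real.pi_pos
  set g := fun θ : ℝ => exp (I * ↑(μ * θ + z * Real.cos θ))
  have hII : ∀ u v, IntervalIntegrable g volume u v := fun u v =>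
    (by fun_prop : Continuous g).intervalIntegrable u v
  have hsin : ∀ a b, b - a = π / 3 → 8 / z + 16 * (b - a) / z ≤ 25 / √z := fun a b hab => by
    have hsqrt_le : √z ≤ z := by nlinarith [Real.sq_sqrt hz0.le]
    calc _ = (8 + 16 * (π / 3)) / z := by rw [hab]; ring
      _ ≤ 25 / z := by gcongr; linarith [Real.pi_lt_d2]
      _ ≤ 25 / √z := by gcongr
  have p₁ : ‖∫ θ in (0 : ℝ)..π / 3, g θ‖ ≤ 9 / √z :=
    norm_integral_exp_mul_add_mul_cos_le_of_cos hz0 (by linarith) (.inl fun θ hθ =>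
      half_le_cos_of_abs_le (abs_le.2 ⟨by linarith [hθ.1], hθ.2⟩))
  have p₂ : ‖∫ θ in π / 3..2 * π / 3, g θ‖ ≤ 25 / √z :=
    (norm_integral_exp_mul_add_mul_cos_le_of_sin hz0 hμ (by linarith) fun θ hθ =>
      half_le_abs_sin_of_abs_sub_pi_div_two_le
        (abs_le.2 ⟨by linarith [hθ.1], by linarith [hθ.2]⟩)).trans (hsin _ _ (by ring))
  have p₃ : ‖∫ θ in 2 * π / 3..4 * π / 3, g θ‖ ≤ 9 / √z :=
    norm_integral_exp_mul_add_mul_cos_le_of_cos hz0 (by linarith) (.inr fun θ hθ =>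
      cos_le_neg_half_of_abs_sub_pi_le (abs_le.2 ⟨by linarith [hθ.1], by linarith [hθ.2]⟩))
  have p₄ : ‖∫ θ in 4 * π / 3..5 * π / 3, g θ‖ ≤ 25 / √z :=
    (norm_integral_exp_mul_add_mul_cos_le_of_sin hz0 hμ (by linarith) fun θ hθ => by
      simpa [Real.sin_sub_pi] using half_le_abs_sin_of_abs_sub_pi_div_two_le (θ := θ - π)
        (abs_le.2 ⟨by linarith [hθ.1], by linarith [hθ.2]⟩)).trans (hsin _ _ (by ring))
  have p₅ : ‖∫ θ in 5 * π / 3..2 * π, g θ‖ ≤ 9 / √z :=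
    norm_integral_exp_mul_add_mul_cos_le_of_cos hz0 (by linarith) (.inl fun θ hθ => by
      simpa [Real.cos_sub_two_pi] using half_le_cos_of_abs_le (θ := θ - 2 * π)
        (abs_le.2 ⟨by linarith [hθ.1], by linarith [hθ.2]⟩))
  rw [← integral_add_adjacent_intervals (hII 0 (4 * π / 3)) (hII _ _),
    ← integral_add_adjacent_intervals (hII 0 (2 * π / 3)) (hII _ _),
    ← integral_add_adjacent_intervals (hII 0 (π / 3)) (hII _ _),
    ← integral_add_adjacent_intervals (hII (4 * π / 3) (5 * π / 3)) (hII _ _)]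
  calc _ ≤ ‖∫ θ in (0 : ℝ)..π / 3, g θ‖ + ‖∫ θ in π / 3..2 * π / 3, g θ‖
        + ‖∫ θ in 2 * π / 3..4 * π / 3, g θ‖
        + (‖∫ θ in 4 * π / 3..5 * π / 3, g θ‖ + ‖∫ θ in 5 * π / 3..2 * π, g θ‖) :=
        (norm_add_le _ _).trans (add_le_add ((norm_add_le _ _).trans
          (add_le_add_left (norm_add_le _ _) _)) (norm_add_le _ _))
    _ ≤ 9 / √z + 25 / √z + 9 / √z + (25 / √z + 9 / √z) := by gcongr
    _ = 77 / √z := by ring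

end CosinePhase

theorem integral_exp_I_mul_int_mul_cos_pow_eq_zero {n : ℤ} {k : ℕ} (hk : k < n.natAbs) :
    ∫ θ in (0 : ℝ)..2 * π, exp (I * (n * θ)) * (Real.cos θ : ℂ) ^ k = 0 := by
  induction k generalizing n with
  | zero =>
    have hn : (n : ℂ) * I ≠ 0 := mul_ne_zero (Int.cast_ne_zero.2 (by omega)) I_ne_zero
    simp_rw [pow_zero, mul_one, mul_left_comm I, ← mul_assoc]
    rw [integral_exp_mul_complex hn, ofReal_mul, ofReal_ofNat, mul_assoc, mul_comm I,
      exp_int_mul_two_pi_mul_I]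
    simp
  | succ k ih =>
    have hcos : ∀ θ : ℝ, exp (I * (n * θ)) * (Real.cos θ : ℂ) ^ (k + 1) =
        (exp (I * ((n + 1 : ℤ) * θ)) * (Real.cos θ : ℂ) ^ k
          + exp (I * ((n - 1 : ℤ) * θ)) * (Real.cos θ : ℂ) ^ k) / 2 := fun θ => by
      rw [ofReal_cos, cos, pow_succ]
      push_cast
      rw [show I * ((n + 1) * θ) = I * (n * θ) + θ * I by ring,
        show I * ((n - 1) * θ) = I * (n * θ) + -θ * I by ring, exp_add, exp_add]
      ring
    have hcont : ∀ j : ℤ, Continuous fun θ : ℝ => exp (I * (j * θ)) * (Real.cos θ : ℂ) ^ k :=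
      fun j => by fun_prop
    simp_rw [hcos]
    rw [intervalIntegral.integral_div, integral_add ((hcont _).intervalIntegrable _ _)
      ((hcont _).intervalIntegrable _ _), ih (by omega), ih (by omega)]
    simp

theorem norm_integral_exp_int_mul_add_mul_cos_le (m : ℤ) (z : ℝ) :
    ‖∫ θ in (0 : ℝ)..2 * π, exp (I * ↑(m * θ + z * Real.cos θ))‖
      ≤ 2 * π * (|z| ^ m.natAbs * Real.exp |z|) := by
  set P : ℝ → ℂ := fun θ =>
    ∑ k ∈ Finset.range m.natAbs, (I * ↑(z * Real.cos θ)) ^ k / k.factorial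
  have hP : ∫ θ in (0 : ℝ)..2 * π, exp (I * (m * θ)) * P θ = 0 := by
    have hterm : ∀ θ : ℝ, exp (I * (m * θ)) * P θ = ∑ k ∈ Finset.range m.natAbs,
        (I * z) ^ k / k.factorial * (exp (I * (m * θ)) * (Real.cos θ : ℂ) ^ k) := fun θ => by
      rw [Finset.mul_sum]
      refine Finset.sum_congr rfl fun k _ => ?_
      push_cast
      ring
    simp_rw [hterm]
    rw [integral_finsetSum fun k _ => Continuous.intervalIntegrable (by fun_prop) _ _]
    refine Finset.sum_eq_zero fun k hk => ?_
    rw [intervalIntegral.integral_const_mul,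
      integral_exp_I_mul_int_mul_cos_pow_eq_zero (Finset.mem_range.1 hk), mul_zero]
  have hsplit : ∀ θ : ℝ, exp (I * ↑(m * θ + z * Real.cos θ)) =
      exp (I * (m * θ)) * (exp (I * ↑(z * Real.cos θ)) - P θ) + exp (I * (m * θ)) * P θ :=
    fun θ => by rw [← mul_add, sub_add_cancel, ← exp_add]; push_cast; ring_nf
  simp_rw [hsplit]
  have hcP : Continuous P := by fun_prop
  rw [intervalIntegral.integral_add ((by fun_prop : Continuous fun θ : ℝ => exp (I * (m * θ)) *
      (exp (I * ↑(z * Real.cos θ)) - P θ)).intervalIntegrable _ _)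
    ((by fun_prop : Continuous fun θ : ℝ => exp (I * (m * θ)) * P θ).intervalIntegrable _ _),
    hP, add_zero]
  refine (intervalIntegral.norm_integral_le_of_norm_le_const fun θ _ => ?_).trans_eq
    (by rw [sub_zero, abs_of_pos Real.two_pi_pos, mul_comm])
  have hw : ‖I * ↑(z * Real.cos θ)‖ ≤ |z| := by
    rw [norm_mul, norm_I, one_mul, norm_real, Real.norm_eq_abs, abs_mul]
    exact mul_le_of_le_one_right (abs_nonneg z) (Real.abs_cos_le_one θ)
  rw [norm_mul, ← ofReal_intCast, ← ofReal_mul, norm_exp_I_mul_ofReal, one_mul]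
  refine (norm_exp_sub_sum_le_norm_mul_exp _ _).trans ?_
  gcongr

theorem continuous_jint (m : ℤ) : Continuous (jint m) :=
  continuous_parametric_intervalIntegral_of_continuous' (by fun_prop) _ _

theorem norm_jint_le (m : ℤ) (t : ℝ) : ‖jint m t‖ ≤ 2 * π :=
  (norm_integral_exp_I_mul_le _ _ _).trans_eq (by rw [sub_zero, abs_of_pos Real.two_pi_pos])

theorem exists_norm_jint_le_rpow_neg_half (m : ℤ) :
    ∃ C, 0 ≤ C ∧ ∀ t, 0 < t → ‖jint m t‖ ≤ C * t ^ (-(1 / 2) : ℝ) := by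
  set T := max 1 |(m : ℝ)|
  refine ⟨77 + 2 * π * √T, by positivity, fun t ht => ?_⟩
  have hsqrt : 0 < √t := Real.sqrt_pos.2 ht
  rw [Real.rpow_neg ht.le, ← Real.sqrt_eq_rpow, ← div_eq_mul_inv]
  rcases le_or_gt T t with hT | hT
  · have h1 : 1 ≤ t := (le_max_left _ _).trans hT
    have hm : |(m : ℝ)| ≤ t := (le_max_right _ _).trans hT
    have hπ := Real.pi_gt_three
    calc ‖jint m t‖ ≤ 77 / √(4 * π * t) :=
          norm_integral_exp_mul_add_mul_cos_le (by nlinarith) (by nlinarith)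
      _ ≤ 77 / √t := by gcongr; nlinarith
      _ ≤ (77 + 2 * π * √T) / √t := by gcongr; exact le_add_of_nonneg_right (by positivity)
  · calc ‖jint m t‖ ≤ 2 * π := norm_jint_le m t
      _ = 2 * π * √t / √t := by field_simp
      _ ≤ (77 + 2 * π * √T) / √t := by
          gcongr
          exact le_add_of_nonneg_of_le (by norm_num) (by gcongr)

theorem exists_norm_jint_le_rpow_abs (m : ℤ) :
    ∃ C, 0 ≤ C ∧ ∀ t, 0 < t → ‖jint m t‖ ≤ C * t ^ |(m : ℝ)| := by
  set N := m.natAbs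
  have hN : |(m : ℝ)| = N := by simp [N]
  refine ⟨2 * π * ((4 * π) ^ N * Real.exp (4 * π)), by positivity, fun t ht => ?_⟩
  rw [hN, Real.rpow_natCast]
  rcases le_or_gt t 1 with h1 | h1
  · calc ‖jint m t‖ ≤ 2 * π * (|4 * π * t| ^ N * Real.exp |4 * π * t|) :=
          norm_integral_exp_int_mul_add_mul_cos_le m (4 * π * t)
      _ ≤ 2 * π * ((4 * π * t) ^ N * Real.exp (4 * π)) := by
          have : 4 * π * t ≤ 4 * π := mul_le_of_le_one_right (by positivity) h1
          rw [abs_of_pos (by positivity)]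
          gcongr
      _ = 2 * π * ((4 * π) ^ N * Real.exp (4 * π)) * t ^ N := by ring
  · calc ‖jint m t‖ ≤ 2 * π := norm_jint_le m t
      _ = 2 * π * (1 * 1) * 1 := by ring
      _ ≤ 2 * π * ((4 * π) ^ N * Real.exp (4 * π)) * t ^ N := by
          gcongr
          · exact one_le_pow₀ (by linarith [Real.pi_gt_three])
          · exact Real.one_le_exp (by positivity)
          · exact one_le_pow₀ h1.le

theorem le_mul_rpow_of_le_mul_rpow_of_le_mul_rpow {g : ℝ → ℝ} {α β a C D : ℝ}
    (hα : α ≤ a) (hβ : a ≤ β) (hC : 0 ≤ C) (hD : 0 ≤ D)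
    (hgα : ∀ t, 0 < t → g t ≤ C * t ^ α) (hgβ : ∀ t, 0 < t → g t ≤ D * t ^ β) :
    ∀ t, 0 < t → g t ≤ (C + D) * t ^ a := by
  intro t ht
  have hta := Real.rpow_nonneg ht.le a
  rcases le_or_gt 1 t with h1 | h1
  · calc g t ≤ C * t ^ α := hgα t ht
      _ ≤ C * t ^ a := by gcongr
      _ ≤ (C + D) * t ^ a := by gcongr; linarith
  · calc g t ≤ D * t ^ β := hgβ t ht
      _ ≤ D * t ^ a := mul_le_mul_of_nonneg_left (Real.rpow_le_rpow_of_exponent_ge ht h1.le hβ) hD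
      _ ≤ (C + D) * t ^ a := by gcongr; linarith

theorem exists_norm_jint_le_rpow (m : ℤ) {a : ℝ} (ha₁ : -(1 / 2) ≤ a) (ha₂ : a ≤ |(m : ℝ)|) :
    ∃ C, ∀ t, 0 < t → ‖jint m t‖ ≤ C * t ^ a := by
  obtain ⟨C, hC, hCt⟩ := exists_norm_jint_le_rpow_neg_half m
  obtain ⟨D, hD, hDt⟩ := exists_norm_jint_le_rpow_abs m
  exact ⟨C + D, le_mul_rpow_of_le_mul_rpow_of_le_mul_rpow ha₁ ha₂ hC hD hCt hDt⟩

theorem integrableOn_Ioi_of_le_rpow {E : Type*} [NormedAddCommGroup E] {g : ℝ → E}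
    {α β C D : ℝ} (hg : ContinuousOn g (Ioi 0)) (hα : -1 < α) (hβ : β < -1)
    (hgα : ∀ u, 0 < u → ‖g u‖ ≤ C * u ^ α) (hgβ : ∀ u, 0 < u → ‖g u‖ ≤ D * u ^ β) :
    IntegrableOn g (Ioi 0) := by
  rw [← Ioc_union_Ioi_eq_Ioi zero_le_one]
  refine IntegrableOn.union ?_ ?_
  · exact ((intervalIntegrable_rpow' hα).1.const_mul C).mono'
      ((hg.mono Ioc_subset_Ioi_self).aestronglyMeasurable measurableSet_Ioc)
      ((ae_restrict_mem measurableSet_Ioc).mono fun u hu => hgα u hu.1)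
  · exact ((integrableOn_Ioi_rpow_of_lt hβ one_pos).const_mul D).mono'
      ((hg.mono (Ioi_subset_Ioi zero_le_one)).aestronglyMeasurable measurableSet_Ioi)
      ((ae_restrict_mem measurableSet_Ioi).mono fun u hu => hgβ u (one_pos.trans hu))

theorem integrableOn_Ioi_rpow_mul_norm_jint (m : ℤ) {x s : ℝ} (hx : 0 < x) (hs₁ : -(3 / 2) < s)
    (hs₂ : s < |(m : ℝ)| - 1) :
    IntegrableOn (fun u => u ^ s * ‖jint m (x / u)‖) (Ioi 0) := by
  have hbound : ∀ K p : ℝ, (∀ t, 0 < t → ‖jint m t‖ ≤ K * t ^ p) →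
      ∀ u, 0 < u → ‖u ^ s * ‖jint m (x / u)‖‖ ≤ K * x ^ p * u ^ (s - p) := fun K p hK u hu => by
    rw [norm_mul, norm_norm, Real.norm_of_nonneg (by positivity)]
    calc _ ≤ u ^ s * (K * (x / u) ^ p) :=
          mul_le_mul_of_nonneg_left (hK _ (div_pos hx hu)) (by positivity)
      _ = K * x ^ p * u ^ (s - p) := by rw [Real.div_rpow hx.le hu.le, Real.rpow_sub hu]; ring
  obtain ⟨C, -, hC⟩ := exists_norm_jint_le_rpow_neg_half m
  obtain ⟨D, -, hD⟩ := exists_norm_jint_le_rpow_abs m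
  refine integrableOn_Ioi_of_le_rpow (fun u hu => ?_) (by linarith) (by linarith)
    (hbound C _ hC) (hbound D _ hD)
  exact ((Real.continuousAt_rpow_const _ _ (.inl hu.ne')).mul ((continuous_jint m).continuousAt.comp
    (continuousAt_const.div continuousAt_id hu.ne')).norm).continuousWithinAt

theorem norm_mul_prod_cpow_mul_le {ι : Type*} [Fintype ι] {J : ℝ → ℂ} {C a x : ℝ} (hx : 0 < x)
    (hJ : ∀ t, 0 < t → ‖J t‖ ≤ C * t ^ a) (w b : ι → ℂ) {y : ι → ℝ} (hy : ∀ i, 0 < y i) :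
    ‖J (x * ∏ i, y i) * ∏ i, (y i : ℂ) ^ w i * b i‖
      ≤ C * x ^ a * ∏ i, y i ^ (a + (w i).re) * ‖b i‖ := by
  have hprod : 0 < ∏ i, y i := Finset.prod_pos fun i _ => hy i
  rw [norm_mul, norm_prod]
  calc _ ≤ C * (x * ∏ i, y i) ^ a * ∏ i, ‖(y i : ℂ) ^ w i * b i‖ :=
        mul_le_mul_of_nonneg_right (hJ _ (mul_pos hx hprod)) (by positivity)
    _ = C * x ^ a * ∏ i, y i ^ a * ‖(y i : ℂ) ^ w i * b i‖ := by
        rw [Real.mul_rpow hx.le hprod.le, ← Real.finsetProd_rpow _ _ fun i _ => (hy i).le,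
          Finset.prod_mul_distrib]
        ring
    _ = C * x ^ a * ∏ i, y i ^ (a + (w i).re) * ‖b i‖ := by
        congr 1
        refine Finset.prod_congr rfl fun i _ => ?_
        rw [norm_mul, norm_cpow_eq_rpow_re_of_pos (hy i), Real.rpow_add (hy i)]
        ring

theorem stmt_18_general (d : ℕ) (m : Fin (d + 1) → ℤ) (x : ℝ) (hx : 0 < x)
    (ν : Fin d → ℂ)
    (ha : ∃ a : ℝ, -(1 / 2) ≤ a ∧ a ≤ |(m (Fin.last d) : ℝ)| ∧
      ∀ l : Fin d, -(1 / 2 + a) / 2 < (ν l).re ∧ (ν l).re < (|(m l.castSucc : ℝ)| - a) / 2) :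
    IntegrableOn (fun y : Fin d → ℝ =>
        jint (m (Fin.last d)) (x * ∏ l, y l) *
          ∏ l, (y l : ℂ) ^ (2 * ν l - 1) * jint (m l.castSucc) (x / y l))
      (Set.pi Set.univ fun _ => Set.Ioi (0 : ℝ)) := by
  obtain ⟨a, ha₁, ha₂, hν⟩ := ha
  obtain ⟨C, hC⟩ := exists_norm_jint_le_rpow (m (Fin.last d)) ha₁ ha₂
  have hdom : IntegrableOn (fun y : Fin d → ℝ => C * x ^ a *
      ∏ l, y l ^ (a + (2 * ν l - 1).re) * ‖jint (m l.castSucc) (x / y l)‖)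
      (univ.pi fun _ => Ioi 0) := by
    rw [IntegrableOn, volume_pi, Measure.restrict_pi_pi]
    refine (Integrable.fintype_prod (f := fun l u => u ^ (a + (2 * ν l - 1).re) *
      ‖jint (m l.castSucc) (x / u)‖) fun l => ?_).const_mul _
    have hre : (2 * ν l - 1).re = 2 * (ν l).re - 1 := by simp
    exact integrableOn_Ioi_rpow_mul_norm_jint _ hx (by rw [hre]; linarith [(hν l).1])
      (by rw [hre]; linarith [(hν l).2])
  have hJ : ∀ k, Measurable (jint k) := fun k => (continuous_jint k).measurable
  refine hdom.mono' (by fun_prop) ((ae_restrict_mem (.univ_pi fun _ => measurableSet_Ioi)).mono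
    fun y hy => norm_mul_prod_cpow_mul_le hx hC _ _ (mem_univ_pi.1 hy))

/-- Absolute convergence of the integral `j_{ν,m}(x)` representing a complex
Bessel kernel of rank `d+1`: if there is `a ∈ [-1/2, |m_{d+1}|]` with
`-(1/2+a)/2 < Re ν_l < (|m_l|-a)/2` for all `l`, then
`y ↦ j_{m_{d+1}}(x·y_1⋯y_d)·∏_l y_l^{2ν_l-1}·j_{m_l}(x/y_l)` is Lebesgue
integrable on `(0,∞)^d`. -/
theorem stmt_18 (d : ℕ) (hd : 1 ≤ d) (m : Fin (d + 1) → ℤ) (x : ℝ) (hx : 0 < x)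
    (ν : Fin d → ℂ)
    (ha : ∃ a : ℝ, -(1 / 2) ≤ a ∧ a ≤ |(m (Fin.last d) : ℝ)| ∧
      ∀ l : Fin d, -(1 / 2 + a) / 2 < (ν l).re ∧ (ν l).re < (|(m l.castSucc : ℝ)| - a) / 2) :
    IntegrableOn (fun y : Fin d → ℝ =>
        jint (m (Fin.last d)) (x * ∏ l, y l) *
          ∏ l, (y l : ℂ) ^ (2 * ν l - 1) * jint (m l.castSucc) (x / y l))
      (Set.pi Set.univ fun _ => Set.Ioi (0 : ℝ)) :=
  stmt_18_general d m x hx ν ha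
end
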